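/- Let p > 0 and let T_p be the LSV map. Let ρ : [0,1] → [0,∞) be Lebesgue-integrable and suppose the measure ρ·Leb is T_p-invariant, i.e. the pushforward of ρ·Leb under T_p equals ρ·Leb. Then for Lebesgue-almost every x ∈ [0,1], ρ(x) = ρ(g_p^{-1}(x)) / (1 + 2^p (p+1) (g_p^{-1}(x))^p) + (1/2) ρ((x+1)/2). -/

import Mathlib

/-!
Invariance says `ν (T⁻¹ s) = ν s` for `ν = ρ · Leb` and every measurable `s`. On `[0, 1]` the
preimage `T⁻¹ s` splits into `g⁻¹ s ∩ [0, 1/2)` and `(2x - 1)⁻¹ s ∩ [1/2, 1]`, and the change of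
variables formula on each branch rewrites `ν (T⁻¹ s)` as the integral over `s` of the transfer
operator applied to `ρ`. Hence `ρ · Leb` and `(Pρ) · Leb` coincide, so `ρ = Pρ` almost everywhere.
The measurability of `ρ ∘ g⁻¹` needed along the way holds because `g⁻¹` is monotone and the
differentiable map `g` sends null sets to null sets.
-/

open Set MeasureTheory

/-- The LSV map `T_p`. -/
noncomputable def lsvMap (p : ℝ) (x : ℝ) : ℝ :=
  if x < 1 / 2 then x + 2 ^ p * x ^ (p + 1) else 2 * x - 1

open scoped ENNReal

theorem setLIntegral_preimage_inter_eq {f f' φ : ℝ → ℝ} {s t : Set ℝ}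
    (hf : ∀ x ∈ t, HasDerivWithinAt f (f' x) t x) (hf'_pos : ∀ x ∈ t, 0 < f' x)
    (hφ : LeftInvOn φ f t) (hs : MeasurableSet (f ⁻¹' s ∩ t)) (ρ : ℝ → ℝ≥0∞) :
    ∫⁻ x in f ⁻¹' s ∩ t, ρ x = ∫⁻ y in s ∩ f '' t, ρ (φ y) / ENNReal.ofReal (f' (φ y)) := by
  rw [← image_preimage_inter, lintegral_image_eq_lintegral_abs_deriv_mul hs
    (fun x hx => (hf x hx.2).mono inter_subset_right) (hφ.injOn.mono inter_subset_right)]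
  refine setLIntegral_congr_fun hs fun x hx => ?_
  rw [hφ hx.2, abs_of_pos (hf'_pos x hx.2),
    ENNReal.mul_div_cancel (by simpa using hf'_pos x hx.2) ENNReal.ofReal_ne_top]

theorem aemeasurable_comp_of_rightInvOn {β : Type*} [MeasurableSpace β] {g : ℝ → β}
    {f φ : ℝ → ℝ} {s t : Set ℝ} (hs : MeasurableSet s) (hg : AEMeasurable g (volume.restrict t))
    (hφ : AEMeasurable φ (volume.restrict s)) (hf : DifferentiableOn ℝ f t)
    (hmaps : MapsTo φ s t) (hinv : RightInvOn φ f s) :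
    AEMeasurable (g ∘ φ) (volume.restrict s) := by
  refine (hg.mono_ac (Measure.AbsolutelyContinuous.mk fun N hN hN0 => ?_)).comp_aemeasurable hφ
  rw [Measure.restrict_apply hN] at hN0
  rw [Measure.map_apply_of_aemeasurable hφ hN, Measure.restrict_apply_eq_zero' hs]
  refine measure_mono_null (?_ : φ ⁻¹' N ∩ s ⊆ f '' (N ∩ t)) ?_
  · rintro x ⟨hxN, hxs⟩
    exact ⟨φ x, ⟨hxN, hmaps hxs⟩, hinv hxs⟩
  exact addHaar_image_eq_zero_of_differentiableOn_of_addHaar_eq_zero volume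
    (hf.mono inter_subset_right) hN0

theorem StrictMonoOn.monotoneOn_of_rightInvOn {f φ : ℝ → ℝ} {s t : Set ℝ}
    (hf : StrictMonoOn f t) (hmaps : MapsTo φ s t) (hinv : RightInvOn φ f s) :
    MonotoneOn φ s := fun x hx y hy hxy =>
  not_lt.1 fun h => hxy.not_gt (by simpa only [hinv hx, hinv hy] using hf (hmaps hy) (hmaps hx) h)

noncomputable def lsvBranch (p x : ℝ) : ℝ := x + 2 ^ p * x ^ (p + 1)

noncomputable def lsvBranchDeriv (p x : ℝ) : ℝ := 1 + 2 ^ p * (p + 1) * x ^ p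

noncomputable def lsvTransfer (p : ℝ) (ginv : ℝ → ℝ) (ρ : ℝ → ℝ≥0∞) (y : ℝ) : ℝ≥0∞ :=
  ρ (ginv y) / ENNReal.ofReal (lsvBranchDeriv p (ginv y)) + ρ ((y + 1) / 2) / 2

theorem lsvMap_preimage_inter_Icc (p : ℝ) (s : Set ℝ) :
    lsvMap p ⁻¹' s ∩ Icc 0 1
      = (lsvBranch p ⁻¹' s ∩ Ico 0 (1 / 2)) ∪ ((fun x => 2 * x - 1) ⁻¹' s ∩ Icc (1 / 2) 1) := by
  ext x
  simp only [mem_inter_iff, mem_preimage, lsvMap, mem_union, mem_Icc, mem_Ico]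
  split_ifs <;> grind [lsvBranch]

section

variable {p : ℝ}

theorem hasDerivAt_lsvBranch (hp : 0 ≤ p) (x : ℝ) :
    HasDerivAt (lsvBranch p) (lsvBranchDeriv p x) x := by
  have h := (Real.hasDerivAt_rpow_const (x := x) (p := p + 1) (Or.inr (by linarith))).const_mul
    ((2 : ℝ) ^ p)
  refine ((hasDerivAt_id x).add h).congr_deriv ?_
  rw [lsvBranchDeriv, add_sub_cancel_right]
  ring

theorem differentiable_lsvBranch (hp : 0 ≤ p) : Differentiable ℝ (lsvBranch p) :=
  fun x => (hasDerivAt_lsvBranch hp x).differentiableAt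

theorem lsvBranchDeriv_pos (hp : 0 ≤ p) {x : ℝ} (hx : 0 ≤ x) : 0 < lsvBranchDeriv p x := by
  unfold lsvBranchDeriv
  positivity

theorem lsvBranch_strictMonoOn (hp : 0 ≤ p) : StrictMonoOn (lsvBranch p) (Ici 0) := by
  intro u hu v hv huv
  have : u ^ (p + 1) ≤ v ^ (p + 1) := Real.rpow_le_rpow hu huv.le (by linarith)
  have h2p : (0 : ℝ) < 2 ^ p := by positivity
  unfold lsvBranch
  nlinarith

theorem lsvBranch_image_Ico (hp : 0 ≤ p) : lsvBranch p '' Ico 0 (1 / 2) = Ico 0 1 := by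
  have h0 : lsvBranch p 0 = 0 := by simp [lsvBranch, Real.zero_rpow (by linarith : p + 1 ≠ 0)]
  have h1 : lsvBranch p (1 / 2) = 1 := by
    rw [lsvBranch, Real.rpow_add_one (by norm_num), ← mul_assoc, ← Real.mul_rpow (by norm_num)
      (by norm_num)]
    norm_num
  refine Subset.antisymm ?_ ?_
  · rintro _ ⟨x, hx, rfl⟩
    rw [← h0, ← h1]
    exact ⟨(lsvBranch_strictMonoOn hp).monotoneOn (mem_Ici.2 le_rfl) hx.1 hx.1,
      lsvBranch_strictMonoOn hp hx.1 (by norm_num) hx.2⟩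
  · have := intermediate_value_Ico (by norm_num : (0 : ℝ) ≤ 1 / 2)
      (differentiable_lsvBranch hp).continuous.continuousOn
    rwa [h0, h1] at this

theorem measurable_lsvMap (hp : 0 ≤ p) : Measurable (lsvMap p) :=
  Measurable.ite measurableSet_Iio
    (differentiable_lsvBranch hp).continuous.measurable
    (by fun_prop)

section inverse

variable {ginv : ℝ → ℝ}

theorem leftInvOn_lsvBranch (hp : 0 ≤ p) (hmaps : MapsTo ginv (Icc 0 1) (Icc 0 (1 / 2)))
    (hright : RightInvOn ginv (lsvBranch p) (Icc 0 1)) :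
    LeftInvOn ginv (lsvBranch p) (Ico 0 (1 / 2)) := fun y hy => by
  have hgy : lsvBranch p y ∈ Icc 0 1 :=
    Ico_subset_Icc_self (lsvBranch_image_Ico hp ▸ mem_image_of_mem _ hy)
  exact (lsvBranch_strictMonoOn hp).injOn (hmaps hgy).1 hy.1 (hright hgy)

theorem aemeasurable_comp_lsvBranchInv (hp : 0 ≤ p)
    (hmaps : MapsTo ginv (Icc 0 1) (Icc 0 (1 / 2)))
    (hright : RightInvOn ginv (lsvBranch p) (Icc 0 1)) {ρ : ℝ → ℝ≥0∞}
    (hρ : AEMeasurable ρ (volume.restrict (Icc 0 1))) :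
    AEMeasurable (fun y => ρ (ginv y)) (volume.restrict (Icc 0 1)) := by
  have hmono : MonotoneOn ginv (Icc 0 1) := (lsvBranch_strictMonoOn hp).monotoneOn_of_rightInvOn
    (hmaps.mono_right fun y hy => hy.1) hright
  exact aemeasurable_comp_of_rightInvOn measurableSet_Icc
    (hρ.mono_set (Icc_subset_Icc_right (by norm_num)))
    (aemeasurable_restrict_of_monotoneOn measurableSet_Icc hmono)
    (differentiable_lsvBranch hp).differentiableOn hmaps hright

theorem aemeasurable_comp_add_one_div_two {ρ : ℝ → ℝ≥0∞}
    (hρ : AEMeasurable ρ (volume.restrict (Icc 0 1))) :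
    AEMeasurable (fun y => ρ ((y + 1) / 2)) (volume.restrict (Icc 0 1)) :=
  aemeasurable_comp_of_rightInvOn (f := fun x => 2 * x - 1) measurableSet_Icc hρ
    (by fun_prop : Measurable fun y : ℝ => (y + 1) / 2).aemeasurable
    (by fun_prop : Differentiable ℝ fun x : ℝ => 2 * x - 1).differentiableOn
    (fun y hy => ⟨by linarith [hy.1], by linarith [hy.2]⟩) (fun y _ => by ring)

theorem aemeasurable_lsvTransfer (hp : 0 ≤ p)
    (hmaps : MapsTo ginv (Icc 0 1) (Icc 0 (1 / 2)))
    (hright : RightInvOn ginv (lsvBranch p) (Icc 0 1)) {ρ : ℝ → ℝ≥0∞}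
    (hρ : AEMeasurable ρ (volume.restrict (Icc 0 1))) :
    AEMeasurable (lsvTransfer p ginv ρ) (volume.restrict (Icc 0 1)) := by
  have hD : Measurable fun y => ENNReal.ofReal (lsvBranchDeriv p y) := by
    unfold lsvBranchDeriv
    fun_prop
  exact (aemeasurable_comp_lsvBranchInv hp hmaps hright (hρ.div hD.aemeasurable)).add
    ((aemeasurable_comp_add_one_div_two hρ).div_const 2)

theorem map_lsvMap_withDensity (hp : 0 ≤ p)
    (hmaps : MapsTo ginv (Icc 0 1) (Icc 0 (1 / 2)))
    (hright : RightInvOn ginv (lsvBranch p) (Icc 0 1)) {ρ : ℝ → ℝ≥0∞}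
    (hρ : AEMeasurable ρ (volume.restrict (Icc 0 1))) :
    ((volume.restrict (Icc 0 1)).withDensity ρ).map (lsvMap p)
      = (volume.restrict (Icc 0 1)).withDensity (lsvTransfer p ginv ρ) := by
  ext s hs
  have hTs := measurable_lsvMap hp hs
  have hfirst : ∫⁻ x in lsvBranch p ⁻¹' s ∩ Ico 0 (1 / 2), ρ x
      = ∫⁻ y in s ∩ Icc 0 1, ρ (ginv y) / ENNReal.ofReal (lsvBranchDeriv p (ginv y)) := by
    rw [setLIntegral_preimage_inter_eq (fun x _ => (hasDerivAt_lsvBranch hp x).hasDerivWithinAt)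
      (fun x hx => lsvBranchDeriv_pos hp hx.1) (leftInvOn_lsvBranch hp hmaps hright)
      (((differentiable_lsvBranch hp).continuous.measurable hs).inter measurableSet_Ico),
      lsvBranch_image_Ico hp]
    exact setLIntegral_congr ((ae_eq_refl s).inter Ico_ae_eq_Icc)
  have has : MeasurableSet ((fun x : ℝ => 2 * x - 1) ⁻¹' s ∩ Icc (1 / 2) 1) :=
    ((by fun_prop : Measurable fun x : ℝ => 2 * x - 1) hs).inter measurableSet_Icc
  have hsecond : ∫⁻ x in (fun x => 2 * x - 1) ⁻¹' s ∩ Icc (1 / 2) 1, ρ x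
      = ∫⁻ y in s ∩ Icc 0 1, ρ ((y + 1) / 2) / 2 := by
    have hderiv (x : ℝ) : HasDerivAt (fun x : ℝ => 2 * x - 1) 2 x :=
      ((hasDerivAt_id x).const_mul 2 |>.sub_const 1).congr_deriv (mul_one 2)
    have himage : (fun x : ℝ => 2 * x - 1) '' Icc (1 / 2) 1 = Icc 0 1 := by
      ext y
      refine ⟨?_, fun hy => ⟨(y + 1) / 2, ⟨by linarith [hy.1], by linarith [hy.2]⟩, by ring⟩⟩
      rintro ⟨x, hx, rfl⟩
      exact ⟨by linarith [hx.1], by linarith [hx.2]⟩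
    rw [setLIntegral_preimage_inter_eq (φ := fun y => (y + 1) / 2)
      (fun x _ => (hderiv x).hasDerivWithinAt) (fun _ _ => two_pos) (fun x _ => by ring)
      has, himage, ENNReal.ofReal_ofNat]
  have hdisj : Disjoint (lsvBranch p ⁻¹' s ∩ Ico 0 (1 / 2))
      ((fun x : ℝ => 2 * x - 1) ⁻¹' s ∩ Icc (1 / 2) 1) :=
    disjoint_left.2 fun x h₁ h₂ => h₁.2.2.not_ge h₂.2.1
  rw [Measure.map_apply (measurable_lsvMap hp) hs, withDensity_apply _ hTs, withDensity_apply _ hs,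
    Measure.restrict_restrict hTs, Measure.restrict_restrict hs, lsvMap_preimage_inter_Icc,
    lintegral_union has hdisj, hfirst, hsecond,
    ← lintegral_add_right' _
      (((aemeasurable_comp_add_one_div_two hρ).div_const 2).mono_set inter_subset_right)]
  rfl

end inverse

end

theorem stmt16 (p : ℝ) (hp : 0 < p) (ginv : ℝ → ℝ)
    (hginv : ∀ x ∈ Icc (0 : ℝ) 1,
      ginv x ∈ Icc (0 : ℝ) (1 / 2) ∧ ginv x + 2 ^ p * (ginv x) ^ (p + 1) = x)
    (ρ : ℝ → ℝ) (hρ_nonneg : ∀ x, 0 ≤ ρ x)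
    (hρ_int : IntegrableOn ρ (Icc (0 : ℝ) 1))
    (hinv : Measure.map (lsvMap p)
        ((volume.restrict (Icc (0 : ℝ) 1)).withDensity (fun x => ENNReal.ofReal (ρ x)))
      = (volume.restrict (Icc (0 : ℝ) 1)).withDensity (fun x => ENNReal.ofReal (ρ x))) :
    ∀ᵐ x ∂(volume.restrict (Icc (0 : ℝ) 1)),
      ρ x = ρ (ginv x) / (1 + 2 ^ p * (p + 1) * (ginv x) ^ p)
        + (1 / 2) * ρ ((x + 1) / 2) := by
  have hmaps : MapsTo ginv (Icc 0 1) (Icc 0 (1 / 2)) := fun x hx => (hginv x hx).1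
  have hright : RightInvOn ginv (lsvBranch p) (Icc 0 1) := fun x hx => (hginv x hx).2
  have hρ := hρ_int.aemeasurable.ennreal_ofReal
  rw [map_lsvMap_withDensity hp.le hmaps hright hρ, withDensity_eq_iff_of_sigmaFinite
    (aemeasurable_lsvTransfer hp.le hmaps hright hρ) hρ] at hinv
  filter_upwards [hinv, ae_restrict_mem measurableSet_Icc] with x hx hxI
  have hD : 0 < lsvBranchDeriv p (ginv x) := lsvBranchDeriv_pos hp.le (hmaps hxI).1
  have hρ₁ : 0 ≤ ρ (ginv x) / lsvBranchDeriv p (ginv x) := div_nonneg (hρ_nonneg _) hD.le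
  have hρ₂ : 0 ≤ 1 / 2 * ρ ((x + 1) / 2) := mul_nonneg (by norm_num) (hρ_nonneg _)
  refine (ENNReal.ofReal_eq_ofReal_iff (hρ_nonneg x) (add_nonneg hρ₁ hρ₂)).1 ?_
  rw [← hx, lsvTransfer, ENNReal.ofReal_add hρ₁ hρ₂, ENNReal.ofReal_div_of_pos hD, mul_comm,
    ← div_eq_mul_one_div, ENNReal.ofReal_div_of_pos two_pos, ENNReal.ofReal_ofNat]
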